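/- arXiv:1910.06802 — 3 statements merged into one kernel-verified Lean document; each statement's English description precedes it below -/
import Mathlib

section
/- Let X be a separable real Hilbert space with inner product ⟨·,·⟩ and Hilbert (orthonormal) basis (φ_k)_{k≥1}, let (λ_k)_{k≥1} be a nondecreasing sequence of nonnegative real numbers, let B : X → X be a bounded linear operator with operator norm at most C_B, where C_B ≥ 1, let T > 0, p ∈ L²((0,T);ℝ), v₀ ∈ X, and let v : [0,T] → X be a continuous function satisfying, for every k ≥ 1 and every t ∈ [0,T], ⟨v(t), φ_k⟩ = e^{−λ_k t}⟨v₀, φ_k⟩ − ∫₀^t e^{−λ_k(t−s)} p(s) ⟨B(v(s) + φ₁), φ_k⟩ ds. Then sup_{t∈[0,T]} ‖v(t)‖² ≤ e^{C_B( 2√T ‖p‖_{L²(0,T)} + T )} ( ‖v₀‖² + C_B ‖p‖²_{L²(0,T)} ). -/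
/-!
Each coordinate `a_k = ⟪v, φ k⟫` is given by Duhamel's formula for `a' + λ_k a = q_k`, with
forcing `q_k = ⟪-p B (v + φ₀), φ k⟫`. It is absolutely continuous, and integrating
`(a_k²)' = 2 q_k a_k - 2 λ_k a_k² ≤ 2 q_k a_k` gives `a_k(t)² ≤ a_k(0)² + 2 ∫ q_k a_k`. Summing
over `k` (Bessel's inequality plus dominated convergence) gives
`‖v t‖² ≤ ‖v₀‖² + 2 ∫ ⟪-p B (v + φ₀), v⟫`, and Young's inequality bounds the integrand by
`C_B (2|p| + 1) ‖v‖² + C_B p²`. Grönwall's inequality, obtained by integrating the derivative of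
the absolutely continuous function `exp (-∫ c) * (A + ∫ c f)`, together with
`∫ |p| ≤ √T ‖p‖_{L²}` yields the estimate.
-/

open MeasureTheory Set Real
open scoped RealInnerProductSpace

theorem LipschitzOnWith.comp_absolutelyContinuousOnInterval {X Y : Type*} [PseudoMetricSpace X]
    [PseudoMetricSpace Y] {g : X → Y} {f : ℝ → X} {K : NNReal} {s : Set X} {a b : ℝ}
    (hg : LipschitzOnWith K g s) (hf : AbsolutelyContinuousOnInterval f a b)
    (hfs : MapsTo f (uIcc a b) s) : AbsolutelyContinuousOnInterval (g ∘ f) a b := by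
  rw [absolutelyContinuousOnInterval_iff] at hf ⊢
  intro ε hε
  obtain ⟨δ, hδ, hfδ⟩ := hf (ε / (K + 1)) (by positivity)
  refine ⟨δ, hδ, fun E hE hEδ => ?_⟩
  calc ∑ i ∈ Finset.range E.1, dist (g (f (E.2 i).1)) (g (f (E.2 i).2))
      ≤ ∑ i ∈ Finset.range E.1, K * dist (f (E.2 i).1) (f (E.2 i).2) :=
        Finset.sum_le_sum fun i hi =>
          hg.dist_le_mul _ (hfs (hE.1 i hi).1) _ (hfs (hE.1 i hi).2)
    _ = K * ∑ i ∈ Finset.range E.1, dist (f (E.2 i).1) (f (E.2 i).2) := by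
        rw [Finset.mul_sum]
    _ ≤ K * (ε / (K + 1)) := by gcongr; exact (hfδ E hE hEδ).le
    _ < (K + 1) * (ε / (K + 1)) := by gcongr; linarith
    _ = ε := by field_simp

theorem Real.lipschitzOnWith_exp_Iic_zero : LipschitzOnWith 1 exp (Iic 0) :=
  (convex_Iic 0).lipschitzOnWith_of_nnnorm_deriv_le (fun x _ => differentiableAt_exp)
    fun x hx => by
      rw [Real.deriv_exp, ← NNReal.coe_le_coe, coe_nnnorm, Real.norm_of_nonneg (exp_nonneg x)]
      simpa using exp_le_one_iff.mpr hx

theorem le_mul_exp_integral_of_le_add_integral {c f : ℝ → ℝ} {A t : ℝ} (ht : 0 ≤ t)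
    (hc : IntervalIntegrable c volume 0 t) (hc0 : ∀ s ∈ Icc 0 t, 0 ≤ c s)
    (hcf : IntervalIntegrable (fun s => c s * f s) volume 0 t)
    (hf : ∀ s ∈ Icc 0 t, f s ≤ A + ∫ u in 0..s, c u * f u) :
    f t ≤ A * exp (∫ s in 0..t, c s) := by
  set C : ℝ → ℝ := fun s => ∫ u in 0..s, c u
  set Φ : ℝ → ℝ := fun s => A + ∫ u in 0..s, c u * f u
  have hC : AbsolutelyContinuousOnInterval C 0 t :=
    hc.absolutelyContinuousOnInterval_intervalIntegral left_mem_uIcc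
  have hΦ : AbsolutelyContinuousOnInterval Φ 0 t :=
    (LipschitzWith.const A).lipschitzOnWith.absolutelyContinuousOnInterval.fun_add
      (hcf.absolutelyContinuousOnInterval_intervalIntegral left_mem_uIcc)
  have hE : AbsolutelyContinuousOnInterval (fun s => exp (-C s)) 0 t :=
    lipschitzOnWith_exp_Iic_zero.comp_absolutelyContinuousOnInterval hC.neg fun s hs => by
      rw [uIcc_of_le ht] at hs
      simpa using intervalIntegral.integral_nonneg hs.1 fun u hu => hc0 u ⟨hu.1, hu.2.trans hs.2⟩
  have hderiv : ∀ᵐ x, x ∈ Icc 0 t →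
      deriv (fun s => exp (-C s) * Φ s) x = exp (-C x) * c x * (f x - Φ x) := by
    filter_upwards [hc.ae_hasDerivAt_integral, hcf.ae_hasDerivAt_integral] with x hCx hΦx hx
    rw [← uIcc_of_le ht] at hx
    have h : HasDerivAt (fun s => exp (-C s) * Φ s)
        (exp (-C x) * -c x * Φ x + exp (-C x) * (c x * f x)) x :=
      ((hCx hx 0 left_mem_uIcc).neg.exp).mul ((hΦx hx 0 left_mem_uIcc).const_add A)
    rw [h.deriv]
    ring
  have hweighted : exp (-C t) * Φ t ≤ A := by
    have hweighted0 : exp (-C 0) * Φ 0 = A := by simp [C, Φ]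
    have hftc := (hE.fun_mul hΦ).integral_deriv_eq_sub
    have hnonpos : ∫ x in 0..t, deriv (fun s => exp (-C s) * Φ s) x ≤ 0 := by
      rw [← neg_nonneg, ← intervalIntegral.integral_neg]
      refine intervalIntegral.integral_nonneg_of_ae_restrict ht ?_
      rw [Filter.EventuallyLE, ae_restrict_iff' measurableSet_Icc]
      filter_upwards [hderiv] with x hx hxI
      rw [Pi.zero_apply, hx hxI, neg_nonneg]
      exact mul_nonpos_of_nonneg_of_nonpos (mul_nonneg (exp_nonneg _) (hc0 x hxI))
        (sub_nonpos.mpr (hf x hxI))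
    linarith
  calc f t ≤ Φ t := hf t ⟨ht, le_rfl⟩
    _ = exp (C t) * (exp (-C t) * Φ t) := by rw [← mul_assoc, ← exp_add]; simp
    _ ≤ A * exp (C t) := by
        rw [mul_comm A]; exact mul_le_mul_of_nonneg_left hweighted (exp_nonneg _)

theorem IntervalIntegrable.of_sq {p : ℝ → ℝ} {a b : ℝ} (hp : AEStronglyMeasurable p volume)
    (hp2 : IntervalIntegrable (fun s => p s ^ 2) volume a b) : IntervalIntegrable p volume a b := by
  rw [intervalIntegrable_iff] at hp2 ⊢
  have : IsFiniteMeasure (volume.restrict (uIoc a b)) :=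
    isFiniteMeasure_restrict.mpr (by simp [uIoc])
  exact ((memLp_two_iff_integrable_sq hp.restrict).mpr hp2).integrable one_le_two

theorem intervalIntegral.integral_abs_le_sqrt_mul_sqrt {p : ℝ → ℝ} {a b : ℝ} (hab : a ≤ b)
    (hp : IntervalIntegrable p volume a b)
    (hp2 : IntervalIntegrable (fun s => p s ^ 2) volume a b) :
    ∫ s in a..b, |p s| ≤ √(b - a) * √(∫ s in a..b, p s ^ 2) := by
  set P := ∫ s in a..b, |p s|
  set I := ∫ s in a..b, p s ^ 2
  -- integrate `2 m |p| ≤ m² + p²`; the resulting quadratic in `m` has nonpositive discriminant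
  have hquad (m : ℝ) : 0 ≤ (b - a) * (m * m) + (-2 * P) * m + I := by
    have h : ∫ s in a..b, 2 * m * |p s| ≤ ∫ s in a..b, (m ^ 2 + p s ^ 2) :=
      intervalIntegral.integral_mono_on hab (hp.abs.const_mul _) (intervalIntegrable_const.add hp2)
        fun s _ => by nlinarith [sq_nonneg (m - |p s|), sq_abs (p s)]
    rw [intervalIntegral.integral_const_mul,
      intervalIntegral.integral_add intervalIntegrable_const hp2, intervalIntegral.integral_const,
      smul_eq_mul] at h
    nlinarith
  have hdisc := discrim_le_zero hquad
  rw [discrim] at hdisc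
  rw [← Real.sqrt_mul (sub_nonneg.mpr hab)]
  exact (le_abs_self P).trans (Real.abs_le_sqrt (by nlinarith))

theorem integral_const_mul_two_mul_abs_add_one_le {p : ℝ → ℝ} {CB T t : ℝ} (hCB : 0 ≤ CB)
    (ht : t ∈ Icc 0 T) (hp : IntervalIntegrable p volume 0 T)
    (hp2 : IntervalIntegrable (fun s => p s ^ 2) volume 0 T) :
    ∫ s in 0..t, CB * (2 * |p s| + 1) ≤ CB * (2 * √T * √(∫ s in 0..T, p s ^ 2) + T) := by
  have hint : IntervalIntegrable (fun s => 2 * |p s| + 1) volume 0 T :=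
    (hp.abs.const_mul 2).add intervalIntegrable_const
  have hmono : ∫ s in 0..t, (2 * |p s| + 1) ≤ ∫ s in 0..T, (2 * |p s| + 1) :=
    intervalIntegral.integral_mono_interval le_rfl ht.1 ht.2
      (Filter.Eventually.of_forall fun s => by positivity) hint
  have hcs := intervalIntegral.integral_abs_le_sqrt_mul_sqrt (ht.1.trans ht.2) hp hp2
  rw [intervalIntegral.integral_add (hp.abs.const_mul 2) intervalIntegrable_const,
    intervalIntegral.integral_const_mul, intervalIntegral.integral_const, smul_eq_mul, mul_one,
    sub_zero] at hmono
  rw [sub_zero] at hcs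
  rw [intervalIntegral.integral_const_mul]
  gcongr
  nlinarith

/-- Duhamel's formula for `a' + l a = q`, `a 0 = a₀`. -/
noncomputable def mildSolution (l a₀ : ℝ) (q : ℝ → ℝ) (t : ℝ) : ℝ :=
  exp (-l * t) * a₀ + ∫ s in 0..t, exp (-l * (t - s)) * q s

theorem mildSolution_eq_exp_mul (l a₀ : ℝ) (q : ℝ → ℝ) :
    mildSolution l a₀ q = fun t => exp (-l * t) * (a₀ + ∫ s in 0..t, exp (l * s) * q s) := by
  ext t
  have h : ∀ s, exp (-l * (t - s)) * q s = exp (-l * t) * (exp (l * s) * q s) := fun s => by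
    rw [← mul_assoc, ← exp_add]; ring_nf
  simp only [mildSolution, h, intervalIntegral.integral_const_mul, mul_add]

theorem ae_hasDerivAt_mildSolution {l a₀ t : ℝ} {q : ℝ → ℝ}
    (hq : IntervalIntegrable q volume 0 t) :
    ∀ᵐ x, x ∈ uIcc 0 t →
      HasDerivAt (mildSolution l a₀ q) (-l * mildSolution l a₀ q x + q x) x := by
  have hr : IntervalIntegrable (fun s => exp (l * s) * q s) volume 0 t :=
    hq.continuousOn_mul (by fun_prop)
  filter_upwards [hr.ae_hasDerivAt_integral] with x hx hxI
  have h := (((hasDerivAt_id x).const_mul (-l)).exp).mul ((hx hxI 0 left_mem_uIcc).const_add a₀)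
  have hexp : exp (-l * x) * exp (l * x) = 1 := by rw [← exp_add]; simp
  rw [mildSolution_eq_exp_mul]
  refine h.congr_deriv ?_
  simp only [id]
  linear_combination q x * hexp

theorem absolutelyContinuousOnInterval_mildSolution {l a₀ t : ℝ} {q : ℝ → ℝ}
    (hq : IntervalIntegrable q volume 0 t) :
    AbsolutelyContinuousOnInterval (mildSolution l a₀ q) 0 t := by
  rw [mildSolution_eq_exp_mul]
  exact (ContDiffOn.absolutelyContinuousOnInterval (by fun_prop)).fun_mul
    ((LipschitzWith.const a₀).lipschitzOnWith.absolutelyContinuousOnInterval.fun_add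
      ((hq.continuousOn_mul (by fun_prop)).absolutelyContinuousOnInterval_intervalIntegral
        left_mem_uIcc))

theorem sq_mildSolution_le {l a₀ t : ℝ} {q : ℝ → ℝ} (hl : 0 ≤ l) (ht : 0 ≤ t)
    (hq : IntervalIntegrable q volume 0 t) :
    mildSolution l a₀ q t ^ 2 ≤ a₀ ^ 2 + 2 * ∫ s in 0..t, q s * mildSolution l a₀ q s := by
  set a := mildSolution l a₀ q
  have ha := absolutelyContinuousOnInterval_mildSolution (l := l) (a₀ := a₀) hq
  have ha0 : a 0 = a₀ := by simp [a, mildSolution]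
  have hqa : IntervalIntegrable (fun s => 2 * (q s * a s)) volume 0 t :=
    (hq.mul_continuousOn ha.continuousOn).const_mul 2
  have hftc : ∫ s in 0..t, (deriv a s * a s + a s * deriv a s) = a t * a t - a 0 * a 0 :=
    ha.integral_deriv_mul_eq_sub ha
  have hle : ∫ s in 0..t, (deriv a s * a s + a s * deriv a s) ≤ ∫ s in 0..t, 2 * (q s * a s) := by
    refine intervalIntegral.integral_mono_ae_restrict ht ?_ hqa ?_
    · exact (ha.intervalIntegrable_deriv.mul_continuousOn ha.continuousOn).add
        (ha.intervalIntegrable_deriv.continuousOn_mul ha.continuousOn)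
    rw [Filter.EventuallyLE, ae_restrict_iff' measurableSet_Icc]
    filter_upwards [ae_hasDerivAt_mildSolution (l := l) (a₀ := a₀) hq] with x hx hxI
    rw [(hx (by rwa [uIcc_of_le ht])).deriv]
    nlinarith [mul_nonneg hl (sq_nonneg (a x))]
  rw [intervalIntegral.integral_const_mul] at hle
  rw [ha0] at hftc
  nlinarith

section InnerProductSpace

variable {X : Type*} [NormedAddCommGroup X] [InnerProductSpace ℝ X]

theorem Orthonormal.sum_inner_sq_le {ι : Type*} {e : ι → X} (he : Orthonormal ℝ e) (x : X)
    (s : Finset ι) : ∑ i ∈ s, ⟪x, e i⟫ ^ 2 ≤ ‖x‖ ^ 2 := by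
  simpa [real_inner_comm, sq_abs] using he.sum_inner_products_le x (s := s)

theorem Orthonormal.abs_sum_inner_mul_inner_le {ι : Type*} {e : ι → X} (he : Orthonormal ℝ e)
    (x y : X) (s : Finset ι) : |∑ i ∈ s, ⟪x, e i⟫ * ⟪y, e i⟫| ≤ ‖x‖ * ‖y‖ := by
  refine abs_le_of_sq_le_sq ?_ (by positivity)
  calc (∑ i ∈ s, ⟪x, e i⟫ * ⟪y, e i⟫) ^ 2
      ≤ (∑ i ∈ s, ⟪x, e i⟫ ^ 2) * ∑ i ∈ s, ⟪y, e i⟫ ^ 2 := Finset.sum_mul_sq_le_sq_mul_sq _ _ _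
    _ ≤ ‖x‖ ^ 2 * ‖y‖ ^ 2 :=
        mul_le_mul (he.sum_inner_sq_le x s) (he.sum_inner_sq_le y s)
          (Finset.sum_nonneg fun _ _ => sq_nonneg _) (sq_nonneg _)
    _ = (‖x‖ * ‖y‖) ^ 2 := by ring

theorem HilbertBasis.hasSum_inner_mul_inner_real {ι : Type*} (φ : HilbertBasis ι ℝ X) (x y : X) :
    HasSum (fun i => ⟪x, φ i⟫ * ⟪y, φ i⟫) ⟪x, y⟫ := by
  simpa only [real_inner_comm (φ _) y] using φ.hasSum_inner_mul_inner x y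

theorem HilbertBasis.hasSum_inner_sq {ι : Type*} (φ : HilbertBasis ι ℝ X) (x : X) :
    HasSum (fun i => ⟪x, φ i⟫ ^ 2) (‖x‖ ^ 2) := by
  simpa only [← sq, real_inner_self_eq_norm_sq] using φ.hasSum_inner_mul_inner_real x x

theorem norm_sq_le_of_inner_eq_mildSolution (φ : HilbertBasis ℕ ℝ X) {lam : ℕ → ℝ}
    (hlam : ∀ k, 0 ≤ lam k) {F v : ℝ → X} {v₀ : X} {t : ℝ} (ht : 0 ≤ t)
    (hF : IntervalIntegrable F volume 0 t) (hv : ContinuousOn v (Icc 0 t))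
    (hcoord : ∀ k, ∀ s ∈ Icc 0 t,
      ⟪v s, φ k⟫ = mildSolution (lam k) ⟪v₀, φ k⟫ (fun u => ⟪F u, φ k⟫) s) :
    ‖v t‖ ^ 2 ≤ ‖v₀‖ ^ 2 + 2 * ∫ s in 0..t, ⟪F s, v s⟫ := by
  have hFk (k : ℕ) : IntervalIntegrable (fun s => ⟪F s, φ k⟫) volume 0 t :=
    intervalIntegrable_iff.mpr ((intervalIntegrable_iff.mp hF).inner_const (φ k))
  have hv' : ContinuousOn v (uIcc 0 t) := by rwa [uIcc_of_le ht]
  have hterm (k : ℕ) : IntervalIntegrable (fun s => ⟪F s, φ k⟫ * ⟪v s, φ k⟫) volume 0 t :=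
    (hFk k).mul_continuousOn (hv'.inner continuousOn_const)
  have hmode (k : ℕ) : ⟪v t, φ k⟫ ^ 2
      ≤ ⟪v₀, φ k⟫ ^ 2 + 2 * ∫ s in 0..t, ⟪F s, φ k⟫ * ⟪v s, φ k⟫ := by
    have hint : ∫ s in 0..t, ⟪F s, φ k⟫ * ⟪v s, φ k⟫
        = ∫ s in 0..t, ⟪F s, φ k⟫ * mildSolution (lam k) ⟪v₀, φ k⟫ (fun u => ⟪F u, φ k⟫) s :=
      intervalIntegral.integral_congr fun s hs => by
        rw [uIcc_of_le ht] at hs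
        simp only [hcoord k s hs]
    rw [hcoord k t ⟨ht, le_rfl⟩, hint]
    exact sq_mildSolution_le (hlam k) ht (hFk k)
  set G : ℕ → ℝ → ℝ := fun N s => ∑ k ∈ Finset.range N, ⟪F s, φ k⟫ * ⟪v s, φ k⟫
  have hpartial (N : ℕ) :
      ∑ k ∈ Finset.range N, ⟪v t, φ k⟫ ^ 2 ≤ ‖v₀‖ ^ 2 + 2 * ∫ s in 0..t, G N s := by
    calc ∑ k ∈ Finset.range N, ⟪v t, φ k⟫ ^ 2
        ≤ ∑ k ∈ Finset.range N,
            (⟪v₀, φ k⟫ ^ 2 + 2 * ∫ s in 0..t, ⟪F s, φ k⟫ * ⟪v s, φ k⟫) :=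
          Finset.sum_le_sum fun k _ => hmode k
      _ = ∑ k ∈ Finset.range N, ⟪v₀, φ k⟫ ^ 2 + 2 * ∫ s in 0..t, G N s := by
          rw [Finset.sum_add_distrib, ← Finset.mul_sum,
            intervalIntegral.integral_finsetSum fun k _ => hterm k]
      _ ≤ ‖v₀‖ ^ 2 + 2 * ∫ s in 0..t, G N s := by
          gcongr; exact φ.orthonormal.sum_inner_sq_le v₀ _
  obtain ⟨M, hM⟩ := isCompact_Icc.exists_bound_of_continuousOn hv
  have hG : Filter.Tendsto (fun N => ∫ s in 0..t, G N s) Filter.atTop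
      (nhds (∫ s in 0..t, ⟪F s, v s⟫)) := by
    refine intervalIntegral.tendsto_integral_filter_of_dominated_convergence
      (fun s => ‖F s‖ * M) (Filter.Eventually.of_forall fun N => ?_)
      (Filter.Eventually.of_forall fun N => Filter.Eventually.of_forall fun s hs => ?_)
      (hF.norm.mul_const M) (Filter.Eventually.of_forall fun s _ => ?_)
    · have hGN : IntervalIntegrable (G N) volume 0 t := by
        simpa only [G, Finset.sum_fn] using IntervalIntegrable.sum _ fun k _ => hterm k
      exact hGN.def'.aestronglyMeasurable
    · rw [uIoc_of_le ht] at hs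
      rw [Real.norm_eq_abs]
      exact (φ.orthonormal.abs_sum_inner_mul_inner_le _ _ _).trans
        (by gcongr; exact hM s (Ioc_subset_Icc_self hs))
    · exact (φ.hasSum_inner_mul_inner_real (F s) (v s)).tendsto_sum_nat
  exact le_of_tendsto_of_tendsto' (φ.hasSum_inner_sq (v t)).tendsto_sum_nat
    ((hG.const_mul 2).const_add _) hpartial

theorem two_mul_inner_neg_smul_apply_add_le {B : X →L[ℝ] X} {CB : ℝ} (hB : ‖B‖ ≤ CB)
    (r : ℝ) (x e : X) (he : ‖e‖ ≤ 1) :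
    2 * ⟪-r • B (x + e), x⟫ ≤ CB * (2 * |r| + 1) * ‖x‖ ^ 2 + CB * r ^ 2 := by
  have hCB : 0 ≤ CB := (norm_nonneg B).trans hB
  have hBx : ‖B (x + e)‖ ≤ CB * (‖x‖ + 1) :=
    (B.le_opNorm _).trans
      (mul_le_mul hB ((norm_add_le x e).trans (by linarith)) (norm_nonneg _) hCB)
  have hinner : ⟪-r • B (x + e), x⟫ ≤ |r| * (CB * (‖x‖ + 1)) * ‖x‖ := by
    rw [inner_smul_left]
    calc _ ≤ |-r * ⟪B (x + e), x⟫| := le_abs_self _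
      _ ≤ |r| * (‖B (x + e)‖ * ‖x‖) := by
          rw [abs_mul, abs_neg]; gcongr; exact abs_real_inner_le_norm _ _
      _ ≤ |r| * (CB * (‖x‖ + 1)) * ‖x‖ := by rw [← mul_assoc]; gcongr
  nlinarith [mul_nonneg hCB (sq_nonneg (|r| - ‖x‖)), sq_abs r, abs_nonneg r, norm_nonneg x]

theorem norm_sq_le_of_bilinear_mildSolution (φ : HilbertBasis ℕ ℝ X) {lam : ℕ → ℝ}
    (hlam : ∀ k, 0 ≤ lam k) {B : X →L[ℝ] X} {CB : ℝ} (hB : ‖B‖ ≤ CB) {e v₀ : X} (he : ‖e‖ ≤ 1)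
    {p : ℝ → ℝ} {v : ℝ → X} {T t : ℝ} (ht : t ∈ Icc 0 T) (hp : IntervalIntegrable p volume 0 T)
    (hp2 : IntervalIntegrable (fun s => p s ^ 2) volume 0 T) (hv : ContinuousOn v (Icc 0 T))
    (heq : ∀ k, ∀ s ∈ Icc 0 T, ⟪v s, φ k⟫ = exp (-lam k * s) * ⟪v₀, φ k⟫ -
      ∫ u in 0..s, exp (-lam k * (s - u)) * p u * ⟪B (v u + e), φ k⟫) :
    ‖v t‖ ^ 2 ≤ ‖v₀‖ ^ 2 + CB * (∫ s in 0..T, p s ^ 2) +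
      ∫ s in 0..t, CB * (2 * |p s| + 1) * ‖v s‖ ^ 2 := by
  have hCB : 0 ≤ CB := (norm_nonneg B).trans hB
  have hsub : uIcc 0 t ⊆ uIcc 0 T := uIcc_subset_uIcc_left (by rwa [uIcc_of_le (ht.1.trans ht.2)])
  have hpt := hp.mono_set hsub
  have hp2t := hp2.mono_set hsub
  have hvt : ContinuousOn v (Icc 0 t) := hv.mono (Icc_subset_Icc le_rfl ht.2)
  have hv' : ContinuousOn v (uIcc 0 t) := by rwa [uIcc_of_le ht.1]
  have hBv : ContinuousOn (fun s => B (v s + e)) (uIcc 0 t) :=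
    B.continuous.comp_continuousOn (hv'.add continuousOn_const)
  have hF : IntervalIntegrable (fun s => -p s • B (v s + e)) volume 0 t :=
    hpt.neg.smul_continuousOn hBv
  have hcoord (k : ℕ) (s : ℝ) (hs : s ∈ Icc 0 t) : ⟪v s, φ k⟫ =
      mildSolution (lam k) ⟪v₀, φ k⟫ (fun u => ⟪-p u • B (v u + e), φ k⟫) s := by
    rw [heq k s ⟨hs.1, hs.2.trans ht.2⟩, mildSolution, sub_eq_add_neg,
      ← intervalIntegral.integral_neg]
    simp only [inner_smul_left, conj_trivial]
    congr 1
    exact intervalIntegral.integral_congr fun u _ => by ring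
  have hFv : IntervalIntegrable (fun s => 2 * ⟪-p s • B (v s + e), v s⟫) volume 0 t := by
    simpa only [inner_smul_left, conj_trivial, mul_assoc, Pi.neg_apply] using
      (hpt.neg.mul_continuousOn (hBv.inner hv')).const_mul 2
  have hcv : IntervalIntegrable (fun s => CB * (2 * |p s| + 1) * ‖v s‖ ^ 2) volume 0 t :=
    (((hpt.abs.const_mul 2).add intervalIntegrable_const).const_mul CB).mul_continuousOn
      (hv'.norm.pow 2)
  have hmono := intervalIntegral.integral_mono_on ht.1 hFv (hcv.add (hp2t.const_mul CB))
    fun s _ => two_mul_inner_neg_smul_apply_add_le hB (p s) (v s) e he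
  rw [intervalIntegral.integral_const_mul, intervalIntegral.integral_add hcv (hp2t.const_mul CB),
    intervalIntegral.integral_const_mul] at hmono
  have hp2_le : ∫ s in 0..t, p s ^ 2 ≤ ∫ s in 0..T, p s ^ 2 :=
    intervalIntegral.integral_mono_interval le_rfl ht.1 ht.2
      (Filter.Eventually.of_forall fun s => sq_nonneg _) hp2
  linarith [norm_sq_le_of_inner_eq_mildSolution φ hlam ht.1 hF hvt hcoord,
    mul_le_mul_of_nonneg_left hp2_le hCB]

end InnerProductSpace

theorem energy_estimate_nonlinear_general
    {X : Type*} [NormedAddCommGroup X] [InnerProductSpace ℝ X]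
    (φ : HilbertBasis ℕ ℝ X)
    (lam : ℕ → ℝ) (hlam0 : ∀ k, 0 ≤ lam k)
    (B : X →L[ℝ] X) (CB : ℝ) (hCB : 1 ≤ CB) (hBnorm : ‖B‖ ≤ CB)
    (T : ℝ) (hT : 0 < T)
    (p : ℝ → ℝ) (hpm : Measurable p)
    (hp2 : IntervalIntegrable (fun s => p s ^ 2) volume 0 T)
    (v₀ : X) (v : ℝ → X) (hv : ContinuousOn v (Set.Icc 0 T))
    (heq : ∀ (k : ℕ), ∀ t ∈ Set.Icc (0:ℝ) T,
      ⟪v t, φ k⟫ =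
        Real.exp (-lam k * t) * ⟪v₀, φ k⟫ -
          ∫ s in (0:ℝ)..t, Real.exp (-lam k * (t - s)) * p s * ⟪B (v s + φ 0), φ k⟫) :
    ∀ t ∈ Set.Icc (0:ℝ) T,
      ‖v t‖ ^ 2 ≤
        Real.exp (CB * (2 * Real.sqrt T * Real.sqrt (∫ s in (0:ℝ)..T, p s ^ 2) + T)) *
          (‖v₀‖ ^ 2 + CB * ∫ s in (0:ℝ)..T, p s ^ 2) := by
  intro t ht
  have hCB0 : 0 ≤ CB := zero_le_one.trans hCB
  have hpI : IntervalIntegrable p volume 0 T := .of_sq hpm.aestronglyMeasurable hp2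
  set c : ℝ → ℝ := fun s => CB * (2 * |p s| + 1)
  have hc : IntervalIntegrable c volume 0 t :=
    (((hpI.abs.const_mul 2).add intervalIntegrable_const).const_mul CB).mono_set
      (uIcc_subset_uIcc_left (by rwa [uIcc_of_le hT.le]))
  have hv' : ContinuousOn v (uIcc 0 t) := by
    rw [uIcc_of_le ht.1]; exact hv.mono (Icc_subset_Icc le_rfl ht.2)
  have hgronwall := le_mul_exp_integral_of_le_add_integral (f := fun s => ‖v s‖ ^ 2) ht.1 hc
    (fun s _ => mul_nonneg hCB0 (by positivity)) (hc.mul_continuousOn (hv'.norm.pow 2))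
    fun s hs => norm_sq_le_of_bilinear_mildSolution φ hlam0 hBnorm (φ.orthonormal.1 0).le
      ⟨hs.1, hs.2.trans ht.2⟩ hpI hp2 hv heq
  have hA : 0 ≤ ‖v₀‖ ^ 2 + CB * ∫ u in 0..T, p u ^ 2 := add_nonneg (sq_nonneg _)
    (mul_nonneg hCB0 (intervalIntegral.integral_nonneg hT.le fun u _ => sq_nonneg _))
  calc ‖v t‖ ^ 2 ≤ (‖v₀‖ ^ 2 + CB * ∫ u in 0..T, p u ^ 2) * exp (∫ s in 0..t, c s) := hgronwall
    _ ≤ _ := by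
      rw [mul_comm]
      gcongr
      exact integral_const_mul_two_mul_abs_add_one_le hCB0 ht hpI hp2

/-- Uniform energy estimate for the mild solution of the nonlinear bilinear system
`v' + Av + p(t)Bv + p(t)Bφ₁ = 0`, `v(0) = v₀`. -/
theorem energy_estimate_nonlinear
    {X : Type*} [NormedAddCommGroup X] [InnerProductSpace ℝ X] [CompleteSpace X]
    [TopologicalSpace.SeparableSpace X]
    (φ : HilbertBasis ℕ ℝ X)
    (lam : ℕ → ℝ) (hlam0 : ∀ k, 0 ≤ lam k) (hmono : Monotone lam)
    (B : X →L[ℝ] X) (CB : ℝ) (hCB : 1 ≤ CB) (hBnorm : ‖B‖ ≤ CB)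
    (T : ℝ) (hT : 0 < T)
    (p : ℝ → ℝ) (hpm : Measurable p)
    (hp2 : IntervalIntegrable (fun s => p s ^ 2) volume 0 T)
    (v₀ : X) (v : ℝ → X) (hv : ContinuousOn v (Set.Icc 0 T))
    (heq : ∀ (k : ℕ), ∀ t ∈ Set.Icc (0:ℝ) T,
      ⟪v t, φ k⟫ =
        Real.exp (-lam k * t) * ⟪v₀, φ k⟫ -
          ∫ s in (0:ℝ)..t, Real.exp (-lam k * (t - s)) * p s * ⟪B (v s + φ 0), φ k⟫) :
    ∀ t ∈ Set.Icc (0:ℝ) T,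
      ‖v t‖ ^ 2 ≤
        Real.exp (CB * (2 * Real.sqrt T * Real.sqrt (∫ s in (0:ℝ)..T, p s ^ 2) + T)) *
          (‖v₀‖ ^ 2 + CB * ∫ s in (0:ℝ)..T, p s ^ 2) :=
  energy_estimate_nonlinear_general φ lam hlam0 B CB hCB hBnorm T hT p hpm hp2 v₀ v hv heq
end

section
/- For every integer k ≥ 1, | ∫₀¹ 2 x² sin(πx) sin(kπx) dx | ≥ ((2π² − 3)/(6π²)) · k^{−3}. -/
/-!
By `2 sin a sin b = cos (a - b) - cos (a + b)` the coefficient is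
`∫₀¹ x² cos ((k-1)πx) dx - ∫₀¹ x² cos ((k+1)πx) dx`, and an explicit antiderivative gives
`∫₀¹ x² cos (nπx) dx = 2(-1)ⁿ/(nπ)²` for `n ≥ 1`. For `k = 1` the coefficient is
`1/3 - 1/(2π²)`, which is exactly the bound; for `k ≥ 2` it has modulus
`8k/(π²(k²-1)²) ≥ 8/(π²k³)`, and `(2π² - 3)/6 ≤ 8`.
-/

open Real intervalIntegral

lemma integral_sq_mul_cos_mul {c : ℝ} (hc : c ≠ 0) :
    ∫ x in (0:ℝ)..1, x ^ 2 * cos (c * x) =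
      sin c / c + 2 * cos c / c ^ 2 - 2 * sin c / c ^ 3 := by
  have hderiv : ∀ x ∈ Set.uIcc (0:ℝ) 1,
      HasDerivAt (fun x ↦ x ^ 2 * sin (c * x) / c + 2 * x * cos (c * x) / c ^ 2
        - 2 * sin (c * x) / c ^ 3) (x ^ 2 * cos (c * x)) x := by
    intro x _
    have hlin : HasDerivAt (fun x ↦ c * x) c x := by
      simpa using (hasDerivAt_id x).const_mul c
    have hsin : HasDerivAt (fun x ↦ sin (c * x)) (cos (c * x) * c) x :=
      (hasDerivAt_sin (c * x)).comp x hlin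
    have hcos : HasDerivAt (fun x ↦ cos (c * x)) (-sin (c * x) * c) x :=
      (hasDerivAt_cos (c * x)).comp x hlin
    have hsq : HasDerivAt (fun x ↦ x ^ 2) (2 * x) x := by simpa using hasDerivAt_pow 2 x
    have htwo : HasDerivAt (fun x ↦ 2 * x) 2 x := by simpa using (hasDerivAt_id x).const_mul 2
    refine ((((hsq.mul hsin).div_const c).add ((htwo.mul hcos).div_const (c ^ 2))).sub
      ((hsin.const_mul 2).div_const (c ^ 3))).congr_deriv ?_
    field_simp
    ring
  rw [integral_eq_sub_of_hasDerivAt hderiv (Continuous.intervalIntegrable (by fun_prop) _ _)]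
  simp

lemma integral_sq_mul_cos_nat_mul_pi {n : ℕ} (hn : n ≠ 0) :
    ∫ x in (0:ℝ)..1, x ^ 2 * cos (n * π * x) = 2 * (-1) ^ n / (n * π) ^ 2 := by
  rw [integral_sq_mul_cos_mul (by positivity), sin_nat_mul_pi, cos_nat_mul_pi]
  field_simp
  ring

lemma integral_two_mul_sq_mul_sin_pi_mul_mul_sin (k : ℝ) :
    ∫ x in (0:ℝ)..1, 2 * x ^ 2 * sin (π * x) * sin (k * π * x) =
      (∫ x in (0:ℝ)..1, x ^ 2 * cos ((k - 1) * π * x)) -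
        ∫ x in (0:ℝ)..1, x ^ 2 * cos ((k + 1) * π * x) := by
  rw [← integral_sub (Continuous.intervalIntegrable (by fun_prop) _ _)
    (Continuous.intervalIntegrable (by fun_prop) _ _)]
  refine integral_congr fun x _ ↦ ?_
  have := two_mul_sin_mul_sin (k * π * x) (π * x)
  rw [show (k - 1) * π * x = k * π * x - π * x by ring,
    show (k + 1) * π * x = k * π * x + π * x by ring]
  linear_combination x ^ 2 * this

lemma integral_two_mul_sq_mul_sin_pi_mul_mul_sin_pi_mul :
    ∫ x in (0:ℝ)..1, 2 * x ^ 2 * sin (π * x) * sin (π * x) = (2 * π ^ 2 - 3) / (6 * π ^ 2) := by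
  have h := integral_two_mul_sq_mul_sin_pi_mul_mul_sin 1
  rw [one_mul, sub_self] at h
  rw [h, show (1 : ℝ) + 1 = ((2 : ℕ) : ℝ) by norm_num,
    integral_sq_mul_cos_nat_mul_pi two_ne_zero]
  simp only [zero_mul, cos_zero, mul_one, integral_pow]
  field_simp
  ring

lemma integral_two_mul_sq_mul_sin_pi_mul_mul_sin_nat_mul_pi {k : ℕ} (hk : 2 ≤ k) :
    ∫ x in (0:ℝ)..1, 2 * x ^ 2 * sin (π * x) * sin (k * π * x) =
      (-1) ^ (k + 1) * (8 * k / (π ^ 2 * ((k : ℝ) ^ 2 - 1) ^ 2)) := by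
  obtain ⟨m, rfl⟩ : ∃ m, k = m + 2 := ⟨k - 2, by omega⟩
  rw [integral_two_mul_sq_mul_sin_pi_mul_mul_sin,
    show ((m + 2 : ℕ) : ℝ) - 1 = ((m + 1 : ℕ) : ℝ) by push_cast; ring,
    show ((m + 2 : ℕ) : ℝ) + 1 = ((m + 3 : ℕ) : ℝ) by push_cast; ring,
    integral_sq_mul_cos_nat_mul_pi (by omega), integral_sq_mul_cos_nat_mul_pi (by omega)]
  have hm : ((m : ℝ) + 2) ^ 2 - 1 = (m + 1) * (m + 3) := by ring
  push_cast
  rw [hm]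
  field_simp
  ring

lemma div_cube_le_eight_mul_div_pi_sq_mul_sq_sub_one_sq {k : ℝ} (hk : 1 < k) :
    (2 * π ^ 2 - 3) / (6 * π ^ 2) / k ^ 3 ≤ 8 * k / (π ^ 2 * (k ^ 2 - 1) ^ 2) := by
  have hk0 : 0 < k := by linarith
  have hsq : 0 < k ^ 2 - 1 := by nlinarith
  calc (2 * π ^ 2 - 3) / (6 * π ^ 2) / k ^ 3
      ≤ 48 / (6 * π ^ 2) / k ^ 3 := by
        gcongr
        nlinarith [pi_pos, pi_lt_four]
    _ = 8 * k / (π ^ 2 * k ^ 4) := by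
        field_simp
        ring
    _ ≤ 8 * k / (π ^ 2 * (k ^ 2 - 1) ^ 2) := by
        gcongr
        nlinarith

/-- Polynomial lower bound on the Fourier coefficients `⟨x²φ₁, φ_k⟩` with respect to the
Dirichlet eigenfunctions: `|∫₀¹ 2x² sin(πx) sin(kπx) dx| ≥ ((2π²-3)/(6π²)) k⁻³`. -/
theorem fourier_coefficients_x_sq_lower_bound :
    ∀ k : ℕ, 1 ≤ k →
      (2 * Real.pi ^ 2 - 3) / (6 * Real.pi ^ 2) / (k : ℝ) ^ 3 ≤
        |∫ x in (0:ℝ)..1, 2 * x ^ 2 * Real.sin (Real.pi * x) * Real.sin (k * Real.pi * x)| := by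
  intro k hk
  rcases hk.eq_or_lt with rfl | hk
  · rw [Nat.cast_one, one_pow, div_one, one_mul, integral_two_mul_sq_mul_sin_pi_mul_mul_sin_pi_mul]
    exact le_abs_self _
  · rw [integral_two_mul_sq_mul_sin_pi_mul_mul_sin_nat_mul_pi hk, abs_mul, abs_neg_one_pow,
      one_mul, abs_of_nonneg (by positivity)]
    exact div_cube_le_eight_mul_div_pi_sq_mul_sq_sub_one_sq (by exact_mod_cast hk)
end

section
/- Let μ : [0,1] → ℝ be three times continuously differentiable with μ'(1) + μ'(0) ≠ 0 and μ'(1) − μ'(0) ≠ 0, and set c_k := ∫₀¹ 2 μ(x) sin(πx) sin(kπx) dx for k ≥ 1. If c_k ≠ 0 for every k ≥ 1, then there exists a constant C > 0 such that |c_k| ≥ C k^{−3} for every k ≥ 1. -/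
/-!
Since `2 sin(πx) sin(kπx) = cos((k-1)πx) - cos((k+1)πx)`, the coefficient `c_k` is a difference
of two cosine coefficients of `μ`. Three integrations by parts give, for `n ≥ 1`,
`∫₀¹ μ(x) cos(nπx) dx = ((-1)ⁿ μ'(1) - μ'(0)) / (nπ)² + e(n) / (nπ)³`, where `e(n)` is a sine
coefficient of `μ'''` and tends to `0` by the Riemann–Lebesgue lemma. The leading terms make
`k³ |c_k|` at least `4 min(|μ'(1) + μ'(0)|, |μ'(1) - μ'(0)|) / π² - o(1)`, so it is eventually
bounded away from `0`; the finitely many remaining `k` are covered by `c_k ≠ 0`.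
-/

open MeasureTheory Set Filter Real Topology
open scoped FourierTransform

theorem tendsto_integral_mul_sin_cocompact {g : ℝ → ℝ} (hg : Integrable g) :
    Tendsto (fun t => ∫ x, g x * sin (t * x)) (cocompact ℝ) (𝓝 0) := by
  -- `∫ g x * sin (t * x)` is minus the imaginary part of the Fourier transform of `g` at `t / 2π`.
  have hF := (Real.tendsto_integral_exp_smul_cocompact (fun x => (g x : ℂ))).comp
    (tendsto_cocompact_mul_right₀ (inv_ne_zero (by positivity : (2 * π) ≠ 0)))
  have him := (Complex.continuous_im.tendsto 0).comp hF |>.neg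
  rw [Complex.zero_im, neg_zero] at him
  refine him.congr fun t => ?_
  have hint : Integrable fun x => 𝐞 (-(x * (t * (2 * π)⁻¹))) • (g x : ℂ) :=
    (Real.fourierIntegral_convergent_iff' (ContinuousLinearMap.mul ℝ ℝ) _).2
      (hg.ofReal (𝕜 := ℂ))
  have him_eq := integral_im hint
  simp only [RCLike.im_to_complex] at him_eq
  rw [Function.comp_apply, Function.comp_apply, ← him_eq, ← integral_neg]
  congr 1 with x
  rw [Circle.smul_def, Real.fourierChar_apply, smul_eq_mul, Complex.mul_im, Complex.ofReal_re,
    Complex.ofReal_im, mul_zero, zero_add, Complex.exp_ofReal_mul_I_im,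
    show 2 * π * -(x * (t * (2 * π)⁻¹)) = -(t * x) by field_simp, Real.sin_neg]
  ring

theorem tendsto_setIntegral_mul_sin_cocompact {g : ℝ → ℝ} {s : Set ℝ} (hs : MeasurableSet s)
    (hg : IntegrableOn g s) :
    Tendsto (fun t => ∫ x in s, g x * sin (t * x)) (cocompact ℝ) (𝓝 0) := by
  refine (tendsto_integral_mul_sin_cocompact ((integrable_indicator_iff hs).2 hg)).congr
    fun t => ?_
  rw [← integral_indicator hs]
  congr 1 with x
  by_cases hx : x ∈ s <;> simp [hx]

theorem tendsto_intervalIntegral_mul_sin_cocompact {g : ℝ → ℝ} {a b : ℝ}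
    (hg : IntervalIntegrable g volume a b) :
    Tendsto (fun t => ∫ x in a..b, g x * sin (t * x)) (cocompact ℝ) (𝓝 0) := by
  simpa only [intervalIntegral, sub_zero] using
    (tendsto_setIntegral_mul_sin_cocompact measurableSet_Ioc hg.1).sub
      (tendsto_setIntegral_mul_sin_cocompact measurableSet_Ioc hg.2)

section IntegrationByParts

variable {f f' : ℝ → ℝ} {a b ω : ℝ}

theorem integral_mul_cos_eq_of_hasDerivWithinAt
    (hf : ∀ x ∈ uIcc a b, HasDerivWithinAt f (f' x) (uIcc a b) x)
    (hf' : IntervalIntegrable f' volume a b) (hω : ω ≠ 0) :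
    ∫ x in a..b, f x * cos (ω * x) =
      (f b * sin (ω * b) - f a * sin (ω * a)) / ω - (∫ x in a..b, f' x * sin (ω * x)) / ω := by
  have hv : ∀ x ∈ uIcc a b,
      HasDerivWithinAt (fun y => sin (ω * y) / ω) (cos (ω * x)) (uIcc a b) x := by
    intro x _
    exact (((hasDerivAt_id' x).const_mul ω).sin.div_const ω).hasDerivWithinAt.congr_deriv
      (by field_simp)
  rw [intervalIntegral.integral_mul_deriv_eq_deriv_mul_of_hasDerivWithinAt hf hv hf'
    ((by fun_prop : Continuous fun x => cos (ω * x)).intervalIntegrable a b),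
    ← intervalIntegral.integral_div]
  simp only [mul_div_assoc]
  ring

theorem integral_mul_sin_eq_of_hasDerivWithinAt
    (hf : ∀ x ∈ uIcc a b, HasDerivWithinAt f (f' x) (uIcc a b) x)
    (hf' : IntervalIntegrable f' volume a b) (hω : ω ≠ 0) :
    ∫ x in a..b, f x * sin (ω * x) =
      (f a * cos (ω * a) - f b * cos (ω * b)) / ω + (∫ x in a..b, f' x * cos (ω * x)) / ω := by
  have hv : ∀ x ∈ uIcc a b,
      HasDerivWithinAt (fun y => -(cos (ω * y) / ω)) (sin (ω * x)) (uIcc a b) x := by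
    intro x _
    exact (((hasDerivAt_id' x).const_mul ω).cos.div_const ω).neg.hasDerivWithinAt.congr_deriv
      (by field_simp)
  rw [intervalIntegral.integral_mul_deriv_eq_deriv_mul_of_hasDerivWithinAt hf hv hf'
    ((by fun_prop : Continuous fun x => sin (ω * x)).intervalIntegrable a b),
    ← intervalIntegral.integral_div]
  simp only [mul_neg, intervalIntegral.integral_neg, mul_div_assoc]
  ring

end IntegrationByParts

theorem integral_mul_cos_nat_mul_pi_eq {f f₁ f₂ f₃ : ℝ → ℝ}
    (hf : ∀ x ∈ Icc (0 : ℝ) 1, HasDerivWithinAt f (f₁ x) (Icc 0 1) x)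
    (hf₁ : ∀ x ∈ Icc (0 : ℝ) 1, HasDerivWithinAt f₁ (f₂ x) (Icc 0 1) x)
    (hf₂ : ∀ x ∈ Icc (0 : ℝ) 1, HasDerivWithinAt f₂ (f₃ x) (Icc 0 1) x)
    (hf₃ : IntervalIntegrable f₃ volume 0 1) {n : ℕ} (hn : n ≠ 0) :
    ∫ x in (0 : ℝ)..1, f x * cos (n * π * x) =
      ((-1) ^ n * f₁ 1 - f₁ 0) / (n * π) ^ 2 +
        (∫ x in (0 : ℝ)..1, f₃ x * sin (n * π * x)) / (n * π) ^ 3 := by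
  have hI : uIcc (0 : ℝ) 1 = Icc 0 1 := uIcc_of_le zero_le_one
  rw [← hI] at hf hf₁ hf₂
  have hint {g g' : ℝ → ℝ} (hg : ∀ x ∈ uIcc (0 : ℝ) 1, HasDerivWithinAt g (g' x) (uIcc 0 1) x) :
      IntervalIntegrable g volume 0 1 :=
    ContinuousOn.intervalIntegrable fun x hx => (hg x hx).continuousWithinAt
  have hω : (n * π : ℝ) ≠ 0 := by positivity
  rw [integral_mul_cos_eq_of_hasDerivWithinAt hf (hint hf₁) hω,
    integral_mul_sin_eq_of_hasDerivWithinAt hf₁ (hint hf₂) hω,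
    integral_mul_cos_eq_of_hasDerivWithinAt hf₂ hf₃ hω]
  simp only [mul_one, mul_zero, sin_nat_mul_pi, cos_nat_mul_pi, sin_zero, cos_zero]
  field_simp
  ring

theorem integral_two_mul_mul_sin_mul_sin_eq_integral_sub {f : ℝ → ℝ} {a b : ℝ}
    (hf : IntervalIntegrable f volume a b) (k : ℝ) :
    ∫ x in a..b, 2 * f x * sin (π * x) * sin (k * π * x) =
      (∫ x in a..b, f x * cos ((k - 1) * π * x)) - ∫ x in a..b, f x * cos ((k + 1) * π * x) := by
  rw [← intervalIntegral.integral_sub (hf.mul_continuousOn (by fun_prop))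
    (hf.mul_continuousOn (by fun_prop))]
  congr 1 with x
  rw [show (k - 1) * π * x = k * π * x - π * x by ring,
    show (k + 1) * π * x = k * π * x + π * x by ring, ← mul_sub, ← two_mul_sin_mul_sin]
  ring

theorem four_le_cube_mul_inv_sq_sub_inv_sq {K : ℝ} (hK : 1 < K) :
    4 ≤ K ^ 3 * (1 / (K - 1) ^ 2 - 1 / (K + 1) ^ 2) := by
  have h₁ : 0 < K - 1 := by linarith
  rw [div_sub_div _ _ (by positivity) (by positivity), mul_div_assoc', le_div_iff₀ (by positivity)]
  nlinarith [sq_nonneg (K ^ 2), mul_pos h₁ h₁, sq_nonneg K]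

theorem cube_div_sub_one_cube_le {K : ℝ} (hK : 2 ≤ K) : K ^ 3 / (K - 1) ^ 3 ≤ 8 := by
  calc K ^ 3 / (K - 1) ^ 3 = (K / (K - 1)) ^ 3 := (div_pow _ _ _).symm
    _ ≤ 2 ^ 3 := by
      refine pow_le_pow_left₀ (div_nonneg (by linarith) (by linarith)) ?_ 3
      rw [div_le_iff₀ (by linarith)]
      linarith
    _ = 8 := by norm_num

theorem cube_div_add_one_cube_le {K : ℝ} (hK : 0 ≤ K) : K ^ 3 / (K + 1) ^ 3 ≤ 1 := by
  rw [div_le_one (by positivity)]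
  gcongr
  linarith

theorem le_abs_sub_mul_cube {K r : ℝ} (hK : 2 ≤ K) (hr : 0 < r) (s e₁ e₂ : ℝ) :
    4 * |s| / r ^ 2 - 8 * (|e₁| + |e₂|) / r ^ 3 ≤
      |(s / ((K - 1) * r) ^ 2 + e₁ / ((K - 1) * r) ^ 3) -
        (s / ((K + 1) * r) ^ 2 + e₂ / ((K + 1) * r) ^ 3)| * K ^ 3 := by
  have hK₁ : 0 < K - 1 := by linarith
  set M := K ^ 3 * (1 / (K - 1) ^ 2 - 1 / (K + 1) ^ 2)
  set P := K ^ 3 / (K - 1) ^ 3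
  set Q := K ^ 3 / (K + 1) ^ 3
  have hM : 4 ≤ M := four_le_cube_mul_inv_sq_sub_inv_sq (by linarith)
  have hP : P ≤ 8 := cube_div_sub_one_cube_le hK
  have hQ : Q ≤ 8 := (cube_div_add_one_cube_le (by linarith)).trans (by norm_num)
  have hexpand : ((s / ((K - 1) * r) ^ 2 + e₁ / ((K - 1) * r) ^ 3) -
      (s / ((K + 1) * r) ^ 2 + e₂ / ((K + 1) * r) ^ 3)) * K ^ 3 =
      s * M / r ^ 2 + (e₁ * P - e₂ * Q) / r ^ 3 := by
    simp only [M, P, Q]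
    field_simp
    ring
  have hE : |e₁ * P - e₂ * Q| ≤ 8 * (|e₁| + |e₂|) := by
    have hP₀ : 0 ≤ P := by positivity
    have hQ₀ : 0 ≤ Q := by positivity
    calc |e₁ * P - e₂ * Q| ≤ |e₁| * P + |e₂| * Q := by
          simpa only [abs_mul, abs_of_nonneg hP₀, abs_of_nonneg hQ₀] using
            abs_sub (e₁ * P) (e₂ * Q)
      _ ≤ 8 * (|e₁| + |e₂|) := by nlinarith [abs_nonneg e₁, abs_nonneg e₂]
  calc 4 * |s| / r ^ 2 - 8 * (|e₁| + |e₂|) / r ^ 3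
      ≤ |s * M / r ^ 2| - |(e₁ * P - e₂ * Q) / r ^ 3| := by
        rw [abs_div, abs_div, abs_mul, abs_of_pos (by linarith : 0 < M),
          abs_of_pos (by positivity : 0 < r ^ 2), abs_of_pos (by positivity : 0 < r ^ 3)]
        gcongr ?_ / _ - ?_ / _
        nlinarith [abs_nonneg s]
    _ ≤ |s * M / r ^ 2 + (e₁ * P - e₂ * Q) / r ^ 3| := abs_sub_abs_le_abs_add _ _
    _ = _ := by rw [← hexpand, abs_mul, abs_of_pos (by positivity : 0 < K ^ 3)]

theorem min_abs_add_abs_sub_le_abs_neg_one_pow_mul_sub (a b : ℝ) (n : ℕ) :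
    min |a + b| |a - b| ≤ |(-1) ^ n * a - b| := by
  rcases n.even_or_odd with hn | hn
  · simp [hn.neg_one_pow]
  · rw [hn.neg_one_pow, neg_one_mul, ← neg_add', abs_neg]
    exact min_le_left _ _

theorem exists_pos_forall_le_of_eventually_le {a : ℕ → ℝ} {δ : ℝ} (ha : ∀ k, 1 ≤ k → 0 < a k)
    (hδ : 0 < δ) (hev : ∀ᶠ k in atTop, δ ≤ a k) : ∃ C > 0, ∀ k, 1 ≤ k → C ≤ a k := by
  obtain ⟨N, hN⟩ := eventually_atTop.1 hev
  have hne : (Finset.Icc 1 (N + 1)).Nonempty := ⟨1, by simp⟩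
  refine ⟨min δ ((Finset.Icc 1 (N + 1)).inf' hne a), lt_min hδ ?_, fun k hk => ?_⟩
  · exact (Finset.lt_inf'_iff hne).2 fun k hk => ha k (Finset.mem_Icc.1 hk).1
  · rcases le_or_gt k (N + 1) with hkN | hkN
    · exact (min_le_right _ _).trans (Finset.inf'_le _ (Finset.mem_Icc.2 ⟨hk, hkN⟩))
    · exact (min_le_left _ _).trans (hN k (by omega))

theorem integral_two_mul_mul_sin_mul_sin_nat_eq {f f₁ f₂ f₃ : ℝ → ℝ}
    (hf : ∀ x ∈ Icc (0 : ℝ) 1, HasDerivWithinAt f (f₁ x) (Icc 0 1) x)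
    (hf₁ : ∀ x ∈ Icc (0 : ℝ) 1, HasDerivWithinAt f₁ (f₂ x) (Icc 0 1) x)
    (hf₂ : ∀ x ∈ Icc (0 : ℝ) 1, HasDerivWithinAt f₂ (f₃ x) (Icc 0 1) x)
    (hf₃ : IntervalIntegrable f₃ volume 0 1) {k : ℕ} (hk : 2 ≤ k) :
    ∫ x in (0 : ℝ)..1, 2 * f x * sin (π * x) * sin (k * π * x) =
      (((-1) ^ (k + 1) * f₁ 1 - f₁ 0) / ((k - 1) * π) ^ 2 +
          (∫ x in (0 : ℝ)..1, f₃ x * sin ((k - 1) * π * x)) / ((k - 1) * π) ^ 3) -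
        (((-1) ^ (k + 1) * f₁ 1 - f₁ 0) / ((k + 1) * π) ^ 2 +
          (∫ x in (0 : ℝ)..1, f₃ x * sin ((k + 1) * π * x)) / ((k + 1) * π) ^ 3) := by
  obtain ⟨n, rfl⟩ : ∃ n, k = n + 1 := ⟨k - 1, by omega⟩
  have hfi : IntervalIntegrable f volume 0 1 :=
    ContinuousOn.intervalIntegrable_of_Icc zero_le_one fun x hx => (hf x hx).continuousWithinAt
  have hsub : ((n + 1 : ℕ) : ℝ) - 1 = n := by push_cast; ring
  have hadd : ((n + 1 : ℕ) : ℝ) + 1 = (n + 2 : ℕ) := by push_cast; ring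
  rw [integral_two_mul_mul_sin_mul_sin_eq_integral_sub hfi, hsub, hadd,
    integral_mul_cos_nat_mul_pi_eq hf hf₁ hf₂ hf₃ (by omega : n ≠ 0),
    integral_mul_cos_nat_mul_pi_eq hf hf₁ hf₂ hf₃ (by omega : n + 2 ≠ 0)]
  ring

theorem exists_pos_eventually_le_abs_integral_two_mul_mul_sin_mul_sin_mul_cube
    {f f₁ f₂ f₃ : ℝ → ℝ}
    (hf : ∀ x ∈ Icc (0 : ℝ) 1, HasDerivWithinAt f (f₁ x) (Icc 0 1) x)
    (hf₁ : ∀ x ∈ Icc (0 : ℝ) 1, HasDerivWithinAt f₁ (f₂ x) (Icc 0 1) x)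
    (hf₂ : ∀ x ∈ Icc (0 : ℝ) 1, HasDerivWithinAt f₂ (f₃ x) (Icc 0 1) x)
    (hf₃ : IntervalIntegrable f₃ volume 0 1) (hsum : f₁ 1 + f₁ 0 ≠ 0) (hdiff : f₁ 1 - f₁ 0 ≠ 0) :
    ∃ δ > 0, ∀ᶠ k : ℕ in atTop,
      δ ≤ |∫ x in (0 : ℝ)..1, 2 * f x * sin (π * x) * sin (k * π * x)| * k ^ 3 := by
  set d := min |f₁ 1 + f₁ 0| |f₁ 1 - f₁ 0|
  have hd : 0 < d := lt_min (abs_pos.2 hsum) (abs_pos.2 hdiff)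
  set e : ℝ → ℝ := fun ω => ∫ x in (0 : ℝ)..1, f₃ x * sin (ω * π * x)
  have he : Tendsto e atTop (𝓝 0) :=
    (tendsto_intervalIntegral_mul_sin_cocompact hf₃).comp
      ((tendsto_id.atTop_mul_const pi_pos).mono_right atTop_le_cocompact)
  have he_sub : Tendsto (fun k : ℕ => e (k - 1)) atTop (𝓝 0) :=
    he.comp (tendsto_atTop_add_const_right _ (-1) tendsto_natCast_atTop_atTop)
  have he_add : Tendsto (fun k : ℕ => e (k + 1)) atTop (𝓝 0) :=
    he.comp (tendsto_atTop_add_const_right _ 1 tendsto_natCast_atTop_atTop)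
  have hlim : Tendsto (fun k : ℕ => 4 * d / π ^ 2 - 8 * (|e (k - 1)| + |e (k + 1)|) / π ^ 3)
      atTop (𝓝 (4 * d / π ^ 2)) := by
    simpa using
      tendsto_const_nhds.sub (((he_sub.abs.add he_add.abs).const_mul 8).div_const (π ^ 3))
  refine ⟨2 * d / π ^ 2, by positivity, ?_⟩
  filter_upwards [hlim.eventually_const_lt (by gcongr; norm_num :
    2 * d / π ^ 2 < 4 * d / π ^ 2), eventually_ge_atTop 2] with k hlt hk
  calc 2 * d / π ^ 2 ≤ 4 * d / π ^ 2 - 8 * (|e (k - 1)| + |e (k + 1)|) / π ^ 3 := hlt.le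
    _ ≤ 4 * |(-1) ^ (k + 1) * f₁ 1 - f₁ 0| / π ^ 2 - 8 * (|e (k - 1)| + |e (k + 1)|) / π ^ 3 := by
      gcongr
      exact min_abs_add_abs_sub_le_abs_neg_one_pow_mul_sub _ _ _
    _ ≤ _ := by
      rw [integral_two_mul_mul_sin_mul_sin_nat_eq hf hf₁ hf₂ hf₃ hk]
      exact le_abs_sub_mul_cube (by exact_mod_cast hk) pi_pos _ _ _

/-- Lower bound on the Fourier coefficients `c_k = ∫₀¹ 2μ(x) sin(πx) sin(kπx) dx` for a
`C³` potential `μ` with `μ'(1) ± μ'(0) ≠ 0` and `c_k ≠ 0` for all `k`: there is `C > 0`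
with `|c_k| ≥ C k⁻³`. -/
theorem fourier_coefficients_dirichlet_lower_bound
    (μ μ' μ'' μ''' : ℝ → ℝ)
    (hμ : ∀ x ∈ Set.Icc (0:ℝ) 1, HasDerivWithinAt μ (μ' x) (Set.Icc 0 1) x)
    (hμ' : ∀ x ∈ Set.Icc (0:ℝ) 1, HasDerivWithinAt μ' (μ'' x) (Set.Icc 0 1) x)
    (hμ'' : ∀ x ∈ Set.Icc (0:ℝ) 1, HasDerivWithinAt μ'' (μ''' x) (Set.Icc 0 1) x)
    (hμ''' : ContinuousOn μ''' (Set.Icc 0 1))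
    (hsum : μ' 1 + μ' 0 ≠ 0) (hdiff : μ' 1 - μ' 0 ≠ 0)
    (c : ℕ → ℝ)
    (hc : ∀ k : ℕ, 1 ≤ k →
      c k = ∫ x in (0:ℝ)..1, 2 * μ x * Real.sin (Real.pi * x) * Real.sin (k * Real.pi * x))
    (hne : ∀ k : ℕ, 1 ≤ k → c k ≠ 0) :
    ∃ C > (0:ℝ), ∀ k : ℕ, 1 ≤ k → C / (k : ℝ) ^ 3 ≤ |c k| := by
  obtain ⟨δ, hδ, hev⟩ := exists_pos_eventually_le_abs_integral_two_mul_mul_sin_mul_sin_mul_cube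
    hμ hμ' hμ'' (hμ'''.intervalIntegrable_of_Icc zero_le_one) hsum hdiff
  have hev' : ∀ᶠ k : ℕ in atTop, δ ≤ |c k| * k ^ 3 := by
    filter_upwards [hev, eventually_ge_atTop 1] with k hk hk1
    rwa [hc k hk1]
  obtain ⟨C, hC, hle⟩ := exists_pos_forall_le_of_eventually_le
    (fun k hk => mul_pos (abs_pos.2 (hne k hk)) (by positivity)) hδ hev'
  exact ⟨C, hC, fun k hk => (div_le_iff₀ (by positivity)).2 (hle k hk)⟩
end
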